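/- Let p be a prime, n a positive integer, u ∈ Z_p^n with u ≠ 0, and let W be a Z_p-subspace of Z_p^((p-1))[x_1,...,x_n] with W ≠ Z_p^((p-1))[x_1,...,x_n]. Set R = { y ∈ Z_p^n : y^(p-1) ∈ W }, and for k ∈ Z_p set V_k = { y ∈ Z_p^n : y·u = k } and R_k = R ∩ V_k. If V_0 ⊆ R, then for every nonzero k ∈ Z_p, (p-1) · |R_k| ≤ (p-2) · |V_k|. -/

import Mathlib

/-!
The `(p - 1)`-st powers of linear forms span all forms of degree `p - 1`: a functional killing
them gives, coefficient by coefficient, a polynomial of degree `< p` in each variable that vanishes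
on all of `𝔽_p^n`, hence is zero. So some `y₀ ^ (p - 1)` lies outside `W`, and a functional `φ`
kills `W` but not `y₀ ^ (p - 1)`; by `V_0 ⊆ R` we may normalise `y₀ · u = 1`. For `z ∈ V_0` the map
`t ↦ φ ((z + t y₀) ^ (p - 1))` is a polynomial of degree `p - 1` vanishing at `t = 0`, so the line
`z + t y₀` meets `R` in at most `p - 2` points with `t ≠ 0`. As `R` is stable under scaling, every
`R_t` with `t ≠ 0` is as large as `R_k`, and counting the pairs `(t, z)` with `z + t y₀ ∈ R` gives
`(p - 1) |R_k| ≤ (p - 2) |V_0| = (p - 2) |V_k|`.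
-/

theorem Finsupp.natCast_multinomial_ne_zero {σ K : Type*} [Field K] {d : ℕ}
    (hd : d < ringChar K) {s : σ →₀ ℕ} (hs : s.sum (fun _ m ↦ m) = d) :
    (s.multinomial : K) ≠ 0 := by
  have hchar : (ringChar K).Prime :=
    (CharP.char_is_prime_or_zero K (ringChar K)).resolve_right (by omega)
  intro h
  have hdvd : ringChar K ∣ d.factorial := by
    refine (ringChar.dvd h).trans ⟨∏ i ∈ s.support, (s i).factorial, ?_⟩
    rw [mul_comm, Finsupp.multinomial_eq, Nat.multinomial_spec, ← hs]
    rfl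
  exact absurd (hchar.dvd_factorial.mp hdvd) (not_le.mpr hd)

namespace MvPolynomial

section LinearForm

variable {σ K : Type*} [Fintype σ] [Field K]

noncomputable def linearForm : (σ → K) →ₗ[K] MvPolynomial σ K where
  toFun y := ∑ j, C (y j) * X j
  map_add' y z := by simp only [Pi.add_apply, map_add, add_mul, Finset.sum_add_distrib]
  map_smul' c y := by
    simp only [Pi.smul_apply, smul_eq_mul, map_mul, RingHom.id_apply, Finset.smul_sum,
      smul_eq_C_mul, mul_assoc]

theorem linearForm_apply (y : σ → K) : linearForm y = ∑ j, y j • (X j : MvPolynomial σ K) := by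
  simp only [linearForm, LinearMap.coe_mk, AddHom.coe_mk, smul_eq_C_mul]

theorem linearForm_pow_eq_sum [DecidableEq σ] (y : σ → K) (d : ℕ) :
    linearForm y ^ d = ∑ s ∈ (Finset.univ : Finset σ).finsuppAntidiag d,
      monomial s (s.multinomial * s.prod fun r m ↦ y r ^ m) := by
  ext s
  rw [linearForm_apply, coeff_linearCombination_X_pow_of_fintype, coeff_sum]
  simp only [coeff_monomial, Finset.sum_ite_eq', Finset.mem_finsuppAntidiag',
    Finset.subset_univ, and_true]

end LinearForm

section FiniteField

universe u

-- One universe for `σ` and `K`, as `MvPolynomial.eq_zero_of_eval_eq_zero` demands.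
variable {σ K : Type u} [Fintype σ] [Field K] [Fintype K]

theorem map_monomial_eq_zero_of_map_linearForm_pow {d : ℕ} (hd : d < ringChar K)
    (φ : MvPolynomial σ K →ₗ[K] K) (hφ : ∀ y, φ (linearForm y ^ d) = 0) {s : σ →₀ ℕ}
    (hs : s.sum (fun _ m ↦ m) = d) : φ (monomial s 1) = 0 := by
  classical
  set S := (Finset.univ : Finset σ).finsuppAntidiag d
  -- `P` evaluates to `y ↦ φ (linearForm y ^ d)`.
  set P := ∑ s ∈ S, monomial s ((s.multinomial : K) * φ (monomial s 1))
  have hdq : d ≤ Fintype.card K - 1 := by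
    have := Nat.le_of_dvd Fintype.card_pos (ringChar.dvd (FiniteField.cast_card_eq_zero K))
    omega
  have hP : P ∈ restrictDegree σ K (Fintype.card K - 1) := by
    refine Submodule.sum_mem _ fun t ht ↦ ?_
    refine (monomial_mem_restrictSupport _).mpr (Or.inl fun i ↦ hdq.trans' ?_)
    rw [← (Finset.mem_finsuppAntidiag.mp ht).1]
    exact Finset.single_le_sum (fun _ _ ↦ Nat.zero_le _) (Finset.mem_univ i)
  have hP0 : P = 0 := by
    refine eq_zero_of_eval_eq_zero _ _ P (fun y ↦ ?_) hP
    rw [← hφ y, linearForm_pow_eq_sum, map_sum, map_sum]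
    refine Finset.sum_congr rfl fun t _ ↦ ?_
    set c : K := t.multinomial * t.prod fun r m ↦ y r ^ m
    rw [eval_monomial, ← mul_one c, ← smul_eq_mul c, ← smul_monomial, map_smul, smul_eq_mul]
    ring
  have hcoeff := congr_arg (coeff s) hP0
  simp only [P, coeff_zero, coeff_sum, coeff_monomial, Finset.sum_ite_eq', S,
    Finset.mem_finsuppAntidiag', hs, Finset.subset_univ, and_self, if_true] at hcoeff
  exact (mul_eq_zero.mp hcoeff).resolve_left (Finsupp.natCast_multinomial_ne_zero hd hs)

theorem homogeneousSubmodule_le_span_linearForm_pow {d : ℕ} (hd : d < ringChar K) :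
    homogeneousSubmodule σ K d ≤
      Submodule.span K (Set.range fun y : σ → K ↦ linearForm y ^ d) := by
  intro f hf
  by_contra hspan
  obtain ⟨φ, hφf, hφ⟩ := Submodule.exists_dual_map_eq_bot_of_notMem hspan inferInstance
  have hφ_pow (y : σ → K) : φ (linearForm y ^ d) = 0 :=
    LinearMap.le_ker_iff_map.mpr hφ (Submodule.subset_span ⟨y, rfl⟩)
  refine hφf ?_
  rw [f.as_sum, map_sum]
  refine Finset.sum_eq_zero fun s hs ↦ ?_
  have hs_deg : s.sum (fun _ m ↦ m) = d := by
    rw [← hf (mem_support_iff.mp hs)]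
    simp [Finsupp.weight_apply, Finsupp.sum]
  rw [← mul_one (coeff s f), ← smul_eq_mul, ← smul_monomial, map_smul,
    map_monomial_eq_zero_of_map_linearForm_pow hd φ hφ_pow hs_deg, smul_zero]

theorem exists_dual_map_linearForm_pow_ne_zero {d : ℕ} (hd : d < ringChar K)
    {W : Submodule K (MvPolynomial σ K)} (hW : W < homogeneousSubmodule σ K d) :
    ∃ φ : Module.Dual K (MvPolynomial σ K), (∀ w ∈ W, φ w = 0) ∧
      ∃ y, φ (linearForm y ^ d) ≠ 0 := by
  obtain ⟨f, hfH, hfW⟩ := SetLike.exists_of_lt hW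
  obtain ⟨_, ⟨y, rfl⟩, hyW⟩ := Set.not_subset.mp fun h ↦
    hfW (Submodule.span_le.mpr h (homogeneousSubmodule_le_span_linearForm_pow hd hfH))
  obtain ⟨φ, hφy, hφW⟩ := Submodule.exists_dual_map_eq_bot_of_notMem hyW inferInstance
  exact ⟨φ, fun w hw ↦ LinearMap.le_ker_iff_map.mpr hφW hw, y, hφy⟩

end FiniteField

end MvPolynomial

open Polynomial in
theorem ncard_nonzero_zeros_map_add_smul_pow_le {K A : Type*} [Field K] [CommRing A]
    [Algebra K A] (φ : A →ₗ[K] K) {a b : A} {d : ℕ} (ha : φ (a ^ d) = 0) (hb : φ (b ^ d) ≠ 0) :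
    {t : K | t ≠ 0 ∧ φ ((a + t • b) ^ d) = 0}.ncard ≤ d - 1 := by
  set c : ℕ → K := fun m ↦ φ (b ^ m * a ^ (d - m) * d.choose m)
  set q : K[X] := ∑ m ∈ Finset.range (d + 1), C (c m) * X ^ m
  have hq_eval (t : K) : q.eval t = φ ((a + t • b) ^ d) := by
    simp only [q, c, eval_finsetSum, eval_mul, Polynomial.eval_C, Polynomial.eval_pow,
      Polynomial.eval_X, add_comm a, add_pow,
      map_sum, _root_.smul_pow, smul_mul_assoc, map_smul, smul_eq_mul, mul_comm]
  have hq_coeff (i : ℕ) : q.coeff i = if i < d + 1 then c i else 0 := by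
    simp only [q, finsetSum_coeff, coeff_C_mul_X_pow, Finset.sum_ite_eq, Finset.mem_range]
  have hq_deg : q.natDegree ≤ d :=
    natDegree_le_iff_coeff_eq_zero.mpr fun i hi ↦ by rw [hq_coeff, if_neg (by omega)]
  have hq : q ≠ 0 := fun h ↦ hb <| by
    simpa [c] using (hq_coeff d).symm.trans (congr_arg (coeff · d) h)
  have hroot (t : K) : t ∈ q.rootSet K ↔ φ ((a + t • b) ^ d) = 0 := by
    rw [mem_rootSet_of_ne hq, coe_aeval_eq_eval, hq_eval]
  calc {t : K | t ≠ 0 ∧ φ ((a + t • b) ^ d) = 0}.ncard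
      ≤ (q.rootSet K \ {0}).ncard :=
        Set.ncard_le_ncard (fun t ht ↦ ⟨(hroot t).mpr ht.2, ht.1⟩) (q.rootSet_finite K).sdiff
    _ = (q.rootSet K).ncard - 1 :=
        Set.ncard_sdiff_singleton_of_mem ((hroot 0).mpr (by simpa using ha))
    _ ≤ d - 1 := Nat.sub_le_sub_right ((q.ncard_rootSet_le K).trans hq_deg) 1

open Finset in
theorem card_sub_one_mul_ncard_le_of_smul_mem {K ι : Type*} [Field K] [Fintype K] [Fintype ι]
    {Z : Set (ι → K)} (hZ : ∀ c : K, c ≠ 0 → ∀ y ∈ Z, c • y ∈ Z) {u y₁ : ι → K}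
    (hy₁ : y₁ ⬝ᵥ u = 1) {m : ℕ}
    (hline : ∀ z, z ⬝ᵥ u = 0 → {t : K | t ≠ 0 ∧ z + t • y₁ ∈ Z}.ncard ≤ m) {k : K} (hk : k ≠ 0) :
    (Fintype.card K - 1) * {y | y ∈ Z ∧ y ⬝ᵥ u = k}.ncard ≤ m * {y | y ⬝ᵥ u = k}.ncard := by
  classical
  simp only [Set.ncard_eq_toFinset_card', Set.toFinset_ofPred] at hline ⊢
  set Zk := univ.filter fun y ↦ y ∈ Z ∧ y ⬝ᵥ u = k
  set Vk := univ.filter fun y : ι → K ↦ y ⬝ᵥ u = k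
  set V0 := univ.filter fun y : ι → K ↦ y ⬝ᵥ u = 0
  set T := univ.filter fun p : K × (ι → K) ↦ p.1 ≠ 0 ∧ p.2 ⬝ᵥ u = 0 ∧ p.2 + p.1 • y₁ ∈ Z
  have h_prod : #((univ.erase (0 : K)) ×ˢ Zk) ≤ #T := by
    refine card_le_card_of_injOn (fun p ↦ (p.1, (p.1 / k) • p.2 - p.1 • y₁)) ?_ ?_
    · intro ⟨t, y⟩ hp
      simp only [coe_product, Set.mem_prod, mem_coe, mem_erase, mem_univ, and_true,
        Zk, mem_filter, true_and] at hp
      simp only [coe_filter, mem_univ, true_and, Set.mem_ofPred_eq, T, sub_add_cancel,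
        sub_dotProduct, smul_dotProduct, hp.2.2, hy₁, smul_eq_mul, div_mul_cancel₀ _ hk, mul_one,
        sub_self]
      exact ⟨hp.1, hZ _ (div_ne_zero hp.1 hk) _ hp.2.1⟩
    · rintro ⟨t, y⟩ hp ⟨t', y'⟩ - h
      simp only [Prod.mk.injEq, mem_coe, mem_product, mem_erase] at h hp ⊢
      obtain ⟨rfl, h⟩ := h
      exact ⟨rfl, smul_right_injective _ (div_ne_zero hp.1.1 hk) (sub_left_inj.mp h)⟩
  have h_fiber : #T ≤ m * #V0 := by
    refine card_le_mul_card_image_of_maps_to (f := Prod.snd) (fun p hp ↦ ?_) m fun z hz ↦ ?_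
    · simp_all [T, V0]
    · refine (card_le_card_of_injOn Prod.fst (fun p hp ↦ ?_) ?_).trans
        (hline z (by simpa [V0] using hz))
      · obtain ⟨⟨ht, -, htZ⟩, rfl⟩ : (p.1 ≠ 0 ∧ _ ∧ _) ∧ p.2 = z := by simpa [T] using hp
        simpa using ⟨ht, htZ⟩
      · rintro ⟨t, y⟩ hp ⟨t', y'⟩ hp' rfl
        simp_all [T]
  have h_shift : #V0 ≤ #Vk := by
    refine card_le_card_of_injOn (· + k • y₁) (fun z hz ↦ ?_) (add_left_injective _).injOn
    simp_all [V0, Vk, add_dotProduct, smul_dotProduct]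
  calc (Fintype.card K - 1) * #Zk = #((univ.erase (0 : K)) ×ˢ Zk) := by
        rw [card_product, card_erase_of_mem (mem_univ _), card_univ]
    _ ≤ m * #V0 := h_prod.trans h_fiber
    _ ≤ m * #Vk := Nat.mul_le_mul_left m h_shift

open MvPolynomial

theorem fraction_lemma_case_one_general {p n : ℕ} (hp : p.Prime)
    (u : Fin n → ZMod p)
    (W : Submodule (ZMod p) (MvPolynomial (Fin n) (ZMod p)))
    (hWle : W ≤ homogeneousSubmodule (Fin n) (ZMod p) (p - 1))
    (hWne : W ≠ homogeneousSubmodule (Fin n) (ZMod p) (p - 1))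
    (hV0 : {y : Fin n → ZMod p | ∑ j, y j * u j = 0} ⊆
      {y : Fin n → ZMod p |
        (∑ j, C (y j) * X j : MvPolynomial (Fin n) (ZMod p)) ^ (p - 1) ∈ W}) :
    ∀ k : ZMod p, k ≠ 0 →
      (p - 1) * ({y : Fin n → ZMod p |
              (∑ j, C (y j) * X j : MvPolynomial (Fin n) (ZMod p)) ^ (p - 1) ∈ W ∧
              ∑ j, y j * u j = k}).ncard ≤
        (p - 2) * ({y : Fin n → ZMod p | ∑ j, y j * u j = k}).ncard := by
  have : Fact p.Prime := ⟨hp⟩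
  intro k hk
  have hd : p - 1 < ringChar (ZMod p) := by
    rw [ZMod.ringChar_zmod_n]
    exact Nat.sub_lt hp.pos one_pos
  obtain ⟨φ, hφ, y₀, hφy₀⟩ :=
    exists_dual_map_linearForm_pow_ne_zero hd (lt_of_le_of_ne hWle hWne)
  have hy₀u : y₀ ⬝ᵥ u ≠ 0 := fun h ↦ hφy₀ (hφ _ (hV0 h))
  set y₁ := (y₀ ⬝ᵥ u)⁻¹ • y₀
  have hy₁u : y₁ ⬝ᵥ u = 1 := by rw [smul_dotProduct, smul_eq_mul, inv_mul_cancel₀ hy₀u]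
  have hφy₁ : φ (linearForm y₁ ^ (p - 1)) ≠ 0 := by
    rw [map_smul, smul_pow, map_smul, smul_eq_mul]
    exact mul_ne_zero (pow_ne_zero _ (inv_ne_zero hy₀u)) hφy₀
  set R := {y | linearForm y ^ (p - 1) ∈ W}
  have hR_smul (c : ZMod p) (_ : c ≠ 0) (y) (hy : y ∈ R) : c • y ∈ R := by
    simpa only [R, Set.mem_ofPred_eq, map_smul, smul_pow] using W.smul_mem _ hy
  have hR_line (z) (hz : z ⬝ᵥ u = 0) : {t : ZMod p | t ≠ 0 ∧ z + t • y₁ ∈ R}.ncard ≤ p - 1 - 1 := by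
    refine le_trans (Set.ncard_le_ncard fun t ht ↦ ?_)
      (ncard_nonzero_zeros_map_add_smul_pow_le φ (a := linearForm z) (hφ _ (hV0 hz)) hφy₁)
    have hW : linearForm (z + t • y₁) ^ (p - 1) ∈ W := ht.2
    rw [map_add, map_smul] at hW
    exact ⟨ht.1, hφ _ hW⟩
  have hcount := card_sub_one_mul_ncard_le_of_smul_mem hR_smul hy₁u hR_line hk
  rwa [ZMod.card, Nat.sub_sub] at hcount

/-- First case of the fraction lemma: if `u ≠ 0`, `W` is a proper subspace of
the homogeneous degree-`(p-1)` polynomials, `R = {y : y^(p-1) ∈ W}`,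
`V_k = {y : y·u = k}`, `R_k = R ∩ V_k`, and `V_0 ⊆ R`, then for every nonzero
`k`, `(p-1) * |R_k| ≤ (p-2) * |V_k|`. -/
theorem fraction_lemma_case_one {p n : ℕ} (hp : p.Prime) (hn : 0 < n)
    (u : Fin n → ZMod p) (hu : u ≠ 0)
    (W : Submodule (ZMod p) (MvPolynomial (Fin n) (ZMod p)))
    (hWle : W ≤ homogeneousSubmodule (Fin n) (ZMod p) (p - 1))
    (hWne : W ≠ homogeneousSubmodule (Fin n) (ZMod p) (p - 1))
    (hV0 : {y : Fin n → ZMod p | ∑ j, y j * u j = 0} ⊆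
      {y : Fin n → ZMod p |
        (∑ j, C (y j) * X j : MvPolynomial (Fin n) (ZMod p)) ^ (p - 1) ∈ W}) :
    ∀ k : ZMod p, k ≠ 0 →
      (p - 1) * ({y : Fin n → ZMod p |
              (∑ j, C (y j) * X j : MvPolynomial (Fin n) (ZMod p)) ^ (p - 1) ∈ W ∧
              ∑ j, y j * u j = k}).ncard ≤
        (p - 2) * ({y : Fin n → ZMod p | ∑ j, y j * u j = k}).ncard :=
  fraction_lemma_case_one_general hp u W hWle hWne hV0
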